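/- Let Φ = (φₙ) be a sequence of real-analytic functions on [−1,1] satisfying φₙ' = −b_{n−1}φ_{n−1} + i cₙ φₙ + bₙ φ_{n+1} with all bₙ ≠ 0 and φₙ(±1) = 0 for all n. Then every φₙ is identically zero. -/

import Mathlib

open Set Filter Topology
open scoped ContDiff

/-!
The recurrence expresses each `φₙ'` near `1` as a linear combination of the `φₘ`, so by
induction every derivative `φₙ⁽ʳ⁾(1)` is a linear combination of values `φₘ(1) = 0`. An analytic
function all of whose derivatives vanish at a point is zero near it, hence on all of `[-1,1]`.
-/

section IteratedDeriv

variable {𝕜 : Type*} [NontriviallyNormedField 𝕜] {F : Type*} [NormedAddCommGroup F]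
  [NormedSpace 𝕜 F] {𝕝 : Type*} [DivisionSemiring 𝕝] [Module 𝕝 F] [SMulCommClass 𝕜 𝕝 F]
  [ContinuousConstSMul 𝕝 F] {ι : Type*} {φ : ι → 𝕜 → F} {x : 𝕜}

theorem iteratedDeriv_eq_zero_of_mem_span {r : ℕ} (hφ : ∀ i, ContDiffAt 𝕜 r (φ i) x)
    (h : ∀ i, iteratedDeriv r (φ i) x = 0) {g : 𝕜 → F}
    (hg : g ∈ Submodule.span 𝕝 (range φ)) : iteratedDeriv r g x = 0 := by
  suffices ContDiffAt 𝕜 r g x ∧ iteratedDeriv r g x = 0 from this.2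
  induction hg using Submodule.span_induction with
  | mem _ hf =>
    obtain ⟨i, rfl⟩ := hf
    exact ⟨hφ i, h i⟩
  | zero => exact ⟨contDiffAt_const, by simp⟩
  | add f₁ f₂ _ _ h₁ h₂ =>
    exact ⟨h₁.1.add h₂.1, by rw [iteratedDeriv_add h₁.1 h₂.1, h₁.2, h₂.2, add_zero]⟩
  | smul a f _ hf =>
    exact ⟨hf.1.const_smul a, by rw [iteratedDeriv_const_smul_field, hf.2, smul_zero]⟩

theorem iteratedDeriv_eq_zero_of_deriv_mem_span (hφ : ∀ i, ContDiffAt 𝕜 ∞ (φ i) x)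
    (hderiv : ∀ i, ∃ g ∈ Submodule.span 𝕝 (range φ), deriv (φ i) =ᶠ[𝓝 x] g)
    (h₀ : ∀ i, φ i x = 0) (r : ℕ) (i : ι) : iteratedDeriv r (φ i) x = 0 := by
  induction r generalizing i with
  | zero => simpa using h₀ i
  | succ r ih =>
    obtain ⟨g, hg, hgφ⟩ := hderiv i
    rw [iteratedDeriv_succ', hgφ.iteratedDeriv_eq]
    exact iteratedDeriv_eq_zero_of_mem_span (fun j => (hφ j).of_le (by exact_mod_cast le_top))
      ih hg

end IteratedDeriv

theorem AnalyticAt.eventuallyEq_zero_of_iteratedDeriv_eq_zero {𝕜 : Type*}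
    [NontriviallyNormedField 𝕜] [CharZero 𝕜] {F : Type*} [NormedAddCommGroup F]
    [NormedSpace 𝕜 F] [CompleteSpace F] {f : 𝕜 → F} {x : 𝕜} (hf : AnalyticAt 𝕜 f x)
    (h : ∀ r, iteratedDeriv r f x = 0) : f =ᶠ[𝓝 x] 0 :=
  analyticOrderAt_eq_top.mp <| ENat.eq_top_iff_forall_ge.mpr fun _ =>
    (natCast_le_analyticOrderAt_iff_iteratedDeriv_eq_zero hf).mpr fun i _ => h i

theorem AnalyticAt.eventuallyEq_of_eqOn_Icc {F : Type*} [NormedAddCommGroup F]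
    [NormedSpace ℝ F] {f g : ℝ → F} {a b : ℝ} (hab : a < b) (hf : AnalyticAt ℝ f b)
    (hg : AnalyticAt ℝ g b) (h : EqOn f g (Icc a b)) : f =ᶠ[𝓝 b] g :=
  (hf.frequently_eq_iff_eventually_eq hg).mp <|
    ((eventually_of_mem (Icc_mem_nhdsLT hab) h).frequently).filter_mono (nhdsLT_le_nhdsNE b)

theorem tsystem_dirichlet_trivial_general (φ : ℕ → ℝ → ℂ) (b : ℕ → ℂ) (c : ℕ → ℝ)
    (han : ∀ n, AnalyticOnNhd ℝ (φ n) (Set.Icc (-1 : ℝ) 1))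
    (hrec0 : ∀ x ∈ Set.Icc (-1 : ℝ) 1, deriv (φ 0) x =
      Complex.I * c 0 * φ 0 x + b 0 * φ 1 x)
    (hrec : ∀ (n : ℕ), ∀ x ∈ Set.Icc (-1 : ℝ) 1, deriv (φ (n + 1)) x =
      -b n * φ n x + Complex.I * c (n + 1) * φ (n + 1) x + b (n + 1) * φ (n + 2) x)
    (hbc : ∀ n, φ n (-1) = 0 ∧ φ n 1 = 0) :
    ∀ n, ∀ x ∈ Set.Icc (-1 : ℝ) 1, φ n x = 0 := by
  have h₁ : (1 : ℝ) ∈ Icc (-1 : ℝ) 1 := by norm_num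
  have hanφ : ∀ n, AnalyticAt ℝ (φ n) 1 := fun n => han n 1 h₁
  have hφ : ∀ n, φ n ∈ Submodule.span ℂ (range φ) := fun n => Submodule.subset_span ⟨n, rfl⟩
  have hderiv : ∀ n, ∃ g ∈ Submodule.span ℂ (range φ), deriv (φ n) =ᶠ[𝓝 1] g := by
    rintro (_ | n)
    · refine ⟨_, add_mem (Submodule.smul_mem _ (Complex.I * c 0) (hφ 0))
        (Submodule.smul_mem _ (b 0) (hφ 1)), ?_⟩
      exact ((han 0).deriv 1 h₁).eventuallyEq_of_eqOn_Icc (by norm_num) (by fun_prop) hrec0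
    · refine ⟨_, add_mem (add_mem (Submodule.smul_mem _ (-b n) (hφ n))
        (Submodule.smul_mem _ (Complex.I * c (n + 1)) (hφ (n + 1))))
        (Submodule.smul_mem _ (b (n + 1)) (hφ (n + 2))), ?_⟩
      exact ((han (n + 1)).deriv 1 h₁).eventuallyEq_of_eqOn_Icc (by norm_num) (by fun_prop)
        (hrec n)
  have hzero : ∀ n, φ n =ᶠ[𝓝 1] 0 := fun n =>
    (hanφ n).eventuallyEq_zero_of_iteratedDeriv_eq_zero fun r =>
      iteratedDeriv_eq_zero_of_deriv_mem_span (fun m => (hanφ m).contDiffAt) hderiv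
        (fun m => (hbc m).2) r n
  exact fun n => (han n).eqOn_zero_of_preconnected_of_eventuallyEq_zero isPreconnected_Icc h₁
    (hzero n)

/-- A T-system of real-analytic functions on `[-1,1]` satisfying zero Dirichlet
boundary conditions must vanish identically. -/
theorem tsystem_dirichlet_trivial (φ : ℕ → ℝ → ℂ) (b : ℕ → ℂ) (c : ℕ → ℝ)
    (hb : ∀ n, b n ≠ 0)
    (han : ∀ n, AnalyticOnNhd ℝ (φ n) (Set.Icc (-1 : ℝ) 1))
    (hrec0 : ∀ x ∈ Set.Icc (-1 : ℝ) 1, deriv (φ 0) x =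
      Complex.I * c 0 * φ 0 x + b 0 * φ 1 x)
    (hrec : ∀ (n : ℕ), ∀ x ∈ Set.Icc (-1 : ℝ) 1, deriv (φ (n + 1)) x =
      -b n * φ n x + Complex.I * c (n + 1) * φ (n + 1) x + b (n + 1) * φ (n + 2) x)
    (hbc : ∀ n, φ n (-1) = 0 ∧ φ n 1 = 0) :
    ∀ n, ∀ x ∈ Set.Icc (-1 : ℝ) 1, φ n x = 0 :=
  tsystem_dirichlet_trivial_general φ b c han hrec0 hrec hbc
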